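/- arXiv:2507.02809 — 4 statements merged into one kernel-verified Lean document; each statement's English description precedes it below -/
import Mathlib

section
/- Let ω ∈ (1,2). For every integer l, the l-th Fourier coefficient of the symbol g(θ) = (4 sin²(θ/2))^{ω/2} admits the closed form (1/(2π)) ∫_{-π}^{π} (4 sin²(θ/2))^{ω/2} e^{-i l θ} dθ = (-1)^l Γ(ω+1) / ( Γ(ω/2 - l + 1) · Γ(ω/2 + l + 1) ), where Γ is the real Gamma function (the left-hand side, a priori a complex number, equals this real number). -/
/-!
Write `g` for the symbol and `c_l` for its Fourier coefficients. The function
`g(θ) sin(θ/2) e^{-i(l+1/2)θ}` takes the same value at `±π` (since `cos((l+1/2)π) = 0`),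
and its derivative is `((ω/2 - l) g e^{-ilθ} + (ω/2 + l + 1) g e^{-i(l+1)θ}) / 2`.
Integrating over a period gives the recurrence `(ω/2 - l) c_l + (ω/2 + l + 1) c_{l+1} = 0`,
which the Gamma quotient satisfies as well. As `ω/2` is not an integer, the coefficients of the
recurrence never vanish, so both sequences are determined by their value at `l = 0`. There `c_0`
is a Beta integral, computed with the substitution `t = sin² u` and Legendre's duplication
formula.
-/

open MeasureTheory Real
open Complex (I)

theorem integral_rpow_mul_one_sub_rpow {a b : ℝ} (ha : 0 < a) (hb : 0 < b) :
    ∫ t in (0 : ℝ)..1, t ^ (a - 1) * (1 - t) ^ (b - 1) = Gamma a * Gamma b / Gamma (a + b) := by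
  have h := Complex.betaIntegral_eq_Gamma_mul_div a b (by simpa using ha) (by simpa using hb)
  rw [Complex.betaIntegral, ← intervalIntegral.integral_congr
      (f := fun t : ℝ => ((t ^ (a - 1) * (1 - t) ^ (b - 1) : ℝ) : ℂ)),
    intervalIntegral.integral_ofReal, ← Complex.ofReal_add, Complex.Gamma_ofReal,
    Complex.Gamma_ofReal, Complex.Gamma_ofReal] at h
  · exact_mod_cast h
  · intro t ht
    rw [Set.uIcc_of_le zero_le_one] at ht
    simp only [Complex.ofReal_mul, Complex.ofReal_cpow ht.1,
      Complex.ofReal_cpow (sub_nonneg.2 ht.2)]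
    push_cast
    rfl

theorem mul_sq_rpow_sub_one {x : ℝ} (hx : 0 < x) (a : ℝ) :
    x * (x ^ 2) ^ (a - 1) = x ^ (2 * a - 1) := by
  rw [← rpow_natCast, ← rpow_mul hx.le,
    show 2 * a - 1 = 1 + (2 : ℕ) * (a - 1) by push_cast; ring, rpow_add hx, rpow_one]

theorem integral_sin_rpow_mul_cos_rpow {a b : ℝ} (ha : 0 < a) (hb : 0 < b) :
    ∫ θ in (0 : ℝ)..π / 2, sin θ ^ (2 * a - 1) * cos θ ^ (2 * b - 1)
      = Gamma a * Gamma b / (2 * Gamma (a + b)) := by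
  have hsin : ∀ θ ∈ Set.Ioo 0 (π / 2), 0 < sin θ := fun θ hθ =>
    sin_pos_of_pos_of_lt_pi hθ.1 (by linarith [hθ.2, pi_pos])
  have hcos : ∀ θ ∈ Set.Ioo 0 (π / 2), 0 < cos θ := fun θ hθ =>
    cos_pos_of_mem_Ioo ⟨by linarith [hθ.1, pi_pos], hθ.2⟩
  have hsub := integral_Icc_deriv_smul_of_deriv_nonneg (f := fun θ => sin θ ^ 2)
    (f' := fun θ => 2 * sin θ * cos θ) (g := fun t => t ^ (a - 1) * (1 - t) ^ (b - 1))
    (by fun_prop) (fun θ _ => ((hasDerivAt_sin θ).fun_pow 2).congr_deriv (by ring))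
    (fun θ hθ => by have := hsin θ hθ; have := hcos θ hθ; positivity) (by positivity)
  simp only [sin_zero, sin_pi_div_two, smul_eq_mul, ← cos_sq', ne_eq, OfNat.ofNat_ne_zero,
    not_false_eq_true, zero_pow, one_pow] at hsub
  rw [integral_Icc_eq_integral_Ioo, setIntegral_congr_fun measurableSet_Ioo
      (g := fun θ => 2 * (sin θ ^ (2 * a - 1) * cos θ ^ (2 * b - 1))) (fun θ hθ => by
        simp only [← mul_sq_rpow_sub_one (hsin θ hθ), ← mul_sq_rpow_sub_one (hcos θ hθ)]
        ring),
    integral_const_mul, ← integral_Ioc_eq_integral_Ioo,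
    ← intervalIntegral.integral_of_le (by positivity), integral_Icc_eq_integral_Ioc,
    ← intervalIntegral.integral_of_le zero_le_one, integral_rpow_mul_one_sub_rpow ha hb] at hsub
  rw [div_mul_eq_div_div_swap, ← hsub]
  ring

theorem integral_sin_rpow {p : ℝ} (hp : -1 < p) :
    ∫ θ in (0 : ℝ)..π / 2, sin θ ^ p
      = √π * Gamma ((p + 1) / 2) / (2 * Gamma (p / 2 + 1)) := by
  have h := integral_sin_rpow_mul_cos_rpow (a := (p + 1) / 2) (b := 1 / 2) (by linarith)
    one_half_pos
  simp only [show 2 * ((p + 1) / 2) - 1 = p by ring, show 2 * (1 / 2 : ℝ) - 1 = 0 by ring,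
    rpow_zero, mul_one, Gamma_one_half_eq, show (p + 1) / 2 + 1 / 2 = p / 2 + 1 by ring] at h
  rw [h]
  ring

theorem hasDerivAt_sq_rpow_mul_self {p : ℝ} (hp : 0 ≤ p) (x : ℝ) :
    HasDerivAt (fun y : ℝ => (y ^ 2) ^ p * y) ((2 * p + 1) * (x ^ 2) ^ p) x := by
  have hcont : Continuous fun y : ℝ => (y ^ 2) ^ p :=
    (continuous_pow 2).rpow_const fun _ => Or.inr hp
  refine hasDerivAt_of_hasDerivAt_of_ne' (x := 0) (fun y hy => ?_)
    (hcont.mul continuous_id).continuousAt (hcont.const_mul _).continuousAt x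
  have hy2 : y ^ 2 ≠ 0 := pow_ne_zero 2 hy
  refine (((hasDerivAt_pow 2 y).rpow_const (Or.inl hy2)).mul (hasDerivAt_id' y)).congr_deriv ?_
  rw [rpow_sub_one hy2]
  norm_num
  field_simp

theorem eq_of_forall_mul_add_mul_succ_eq_zero {R : Type*} [CommRing R] [IsDomain R]
    {p q a b : ℤ → R} (hp : ∀ l, p l ≠ 0) (hq : ∀ l, q l ≠ 0)
    (ha : ∀ l, p l * a l + q l * a (l + 1) = 0) (hb : ∀ l, p l * b l + q l * b (l + 1) = 0)
    (h0 : a 0 = b 0) (l : ℤ) : a l = b l := by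
  induction l using Int.induction_on with
  | zero => exact h0
  | succ i ih => exact mul_left_cancel₀ (hq i) (by linear_combination ha i - hb i - p i * ih)
  | pred i ih =>
    have ha' := ha (-i - 1)
    have hb' := hb (-i - 1)
    rw [sub_add_cancel] at ha' hb'
    exact mul_left_cancel₀ (hp (-i - 1)) (by linear_combination ha' - hb' - q (-i - 1) * ih)

noncomputable def fracSymbol (ω θ : ℝ) : ℝ := (4 * sin (θ / 2) ^ 2) ^ (ω / 2)

theorem fracSymbol_neg (ω θ : ℝ) : fracSymbol ω (-θ) = fracSymbol ω θ := by
  simp [fracSymbol, neg_div]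

theorem continuous_fracSymbol {ω : ℝ} (hω : 0 ≤ ω) : Continuous (fracSymbol ω) :=
  (by fun_prop : Continuous fun θ : ℝ => 4 * sin (θ / 2) ^ 2).rpow_const
    fun _ => Or.inr (by positivity)

theorem fracSymbol_two_mul (ω : ℝ) {u : ℝ} (hu : 0 ≤ sin u) :
    fracSymbol ω (2 * u) = 2 ^ ω * sin u ^ ω := by
  rw [fracSymbol, mul_div_cancel_left₀ u two_ne_zero,
    show 4 * sin u ^ 2 = (2 * sin u) ^ (2 : ℝ) by rw [rpow_two]; ring,
    ← rpow_mul (by positivity), mul_div_cancel₀ ω two_ne_zero, mul_rpow zero_le_two hu]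

theorem integral_fracSymbol {ω : ℝ} (hω : 0 ≤ ω) :
    ∫ θ in -π..π, fracSymbol ω θ = 2 * π * Gamma (ω + 1) / Gamma (ω / 2 + 1) ^ 2 := by
  have hint := fun a b => (continuous_fracSymbol hω).intervalIntegrable (μ := volume) a b
  have heven : ∫ θ in -π..0, fracSymbol ω θ = ∫ θ in 0..π, fracSymbol ω θ := by
    simpa [fracSymbol_neg] using
      (intervalIntegral.integral_comp_neg (a := 0) (b := π) (fracSymbol ω)).symm
  have hhalf : ∫ θ in 0..π, fracSymbol ω θ = 2 * 2 ^ ω * ∫ u in 0..π / 2, sin u ^ ω := by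
    have h := intervalIntegral.integral_comp_mul_left (a := 0) (b := π / 2) (fracSymbol ω)
      two_ne_zero
    rw [mul_zero, mul_div_cancel₀ π two_ne_zero, smul_eq_mul, intervalIntegral.integral_congr
      (g := fun u => 2 ^ ω * sin u ^ ω) fun u hu => fracSymbol_two_mul ω ?_,
      intervalIntegral.integral_const_mul] at h
    · rw [mul_assoc, h]
      ring
    · rw [Set.uIcc_of_le (by positivity)] at hu
      exact sin_nonneg_of_nonneg_of_le_pi hu.1 (by linarith [hu.2, pi_pos])
  have hdup := Gamma_mul_Gamma_add_half ((ω + 1) / 2)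
  rw [show (ω + 1) / 2 + 1 / 2 = ω / 2 + 1 by ring, show 2 * ((ω + 1) / 2) = ω + 1 by ring,
    show 1 - (ω + 1) = -ω by ring, rpow_neg zero_le_two] at hdup
  rw [← intervalIntegral.integral_add_adjacent_intervals (hint _ _) (hint _ _), heven, hhalf,
    integral_sin_rpow (by linarith)]
  have h2 : (0 : ℝ) < 2 ^ ω := by positivity
  have hΓ : 0 < Gamma (ω / 2 + 1) := Gamma_pos_of_pos (by positivity)
  set A := Gamma ((ω + 1) / 2)
  set B := Gamma (ω / 2 + 1)
  field_simp at hdup ⊢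
  linear_combination (2 * √π) * hdup + 2 * Gamma (ω + 1) * sq_sqrt pi_pos.le

theorem hasDerivAt_fracSymbol_mul_sin {ω : ℝ} (hω : 0 ≤ ω) (θ : ℝ) :
    HasDerivAt (fun t => fracSymbol ω t * sin (t / 2))
      ((ω + 1) / 2 * fracSymbol ω θ * cos (θ / 2)) θ := by
  have hfun : (fun t => fracSymbol ω t * sin (t / 2))
      = fun t => ((2 * sin (t / 2)) ^ 2) ^ (ω / 2) * (2 * sin (t / 2)) / 2 := by
    ext t
    rw [fracSymbol, mul_pow]
    ring_nf
  rw [hfun]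
  refine (((hasDerivAt_sq_rpow_mul_self (p := ω / 2) (by positivity) (2 * sin (θ / 2))).comp θ
    (((hasDerivAt_sin (θ / 2)).comp θ ((hasDerivAt_id θ).div_const 2)).const_mul 2)).div_const
      2).congr_deriv ?_
  rw [fracSymbol, mul_pow, show (2 : ℝ) ^ 2 = 4 by norm_num]
  ring_nf

noncomputable def fracSymbolFourierCoeff (ω : ℝ) (l : ℤ) : ℂ :=
  1 / (2 * π) * ∫ θ in -π..π, (fracSymbol ω θ : ℂ) * Complex.exp (-(I * l * θ))

theorem hasDerivAt_fracSymbol_primitive {ω : ℝ} (hω : 0 ≤ ω) (l : ℤ) (θ : ℝ) :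
    HasDerivAt
      (fun t : ℝ =>
        ((fracSymbol ω t * sin (t / 2) : ℝ) : ℂ) * Complex.exp (-(I * (l + 1 / 2) * t)))
      ((ω / 2 - l) / 2 * (fracSymbol ω θ * Complex.exp (-(I * l * θ)))
        + (ω / 2 + l + 1) / 2 * (fracSymbol ω θ * Complex.exp (-(I * (l + 1 : ℤ) * θ))))
      θ := by
  set c : ℂ := I * (l + 1 / 2)
  have hexp :
      HasDerivAt (fun t : ℝ => Complex.exp (-(c * t))) (-c * Complex.exp (-(c * θ))) θ := by
    simpa [mul_comm] using (((hasDerivAt_id (θ : ℂ)).const_mul c).comp_ofReal.neg).cexp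
  refine ((hasDerivAt_fracSymbol_mul_sin hω θ).ofReal_comp.mul hexp).congr_deriv ?_
  have hplus : Complex.exp (-(I * l * θ))
      = Complex.exp (-(c * θ)) * Complex.exp ((θ / 2 : ℂ) * I) := by
    rw [← Complex.exp_add]
    congr 1
    ring
  have hminus : Complex.exp (-(I * (l + 1 : ℤ) * θ))
      = Complex.exp (-(c * θ)) * Complex.exp (-(θ / 2 : ℂ) * I) := by
    rw [← Complex.exp_add]
    congr 1
    push_cast
    ring
  rw [hplus, hminus, ← Complex.cos_add_sin_I, ← Complex.cos_sub_sin_I]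
  push_cast
  ring

theorem fracSymbolFourierCoeff_recurrence {ω : ℝ} (hω : 0 ≤ ω) (l : ℤ) :
    (ω / 2 - l) * fracSymbolFourierCoeff ω l
      + (ω / 2 + l + 1) * fracSymbolFourierCoeff ω (l + 1) = 0 := by
  have hint (k : ℤ) : IntervalIntegrable
      (fun θ : ℝ => (fracSymbol ω θ : ℂ) * Complex.exp (-(I * k * θ))) volume (-π) π :=
    (by have := continuous_fracSymbol hω; fun_prop : Continuous _).intervalIntegrable _ _
  have hFTC := intervalIntegral.integral_eq_sub_of_hasDerivAt
    (fun θ _ => hasDerivAt_fracSymbol_primitive hω l θ)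
    (((hint l).const_mul _).add ((hint (l + 1)).const_mul _))
  have hcos : Complex.cos ((l + 1 / 2) * π) = 0 := Complex.cos_eq_zero_iff.2 ⟨l, by ring⟩
  have hbdry :
      ((fracSymbol ω π * sin (π / 2) : ℝ) : ℂ) * Complex.exp (-(I * (l + 1 / 2) * π))
      - ((fracSymbol ω (-π) * sin (-π / 2) : ℝ) : ℂ)
        * Complex.exp (-(I * (l + 1 / 2) * (-π : ℝ))) = 0 := by
    rw [fracSymbol_neg, neg_div, sin_neg, sin_pi_div_two]
    push_cast
    rw [show -(I * (l + 1 / 2) * -π) = (l + 1 / 2) * π * I by ring,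
      show -(I * (l + 1 / 2) * π) = -((l + 1 / 2) * π) * I by ring]
    linear_combination (fracSymbol ω π : ℂ) * (Complex.two_cos ((l + 1 / 2) * π)).symm
      + 2 * (fracSymbol ω π : ℂ) * hcos
  rw [intervalIntegral.integral_add ((hint l).const_mul _) ((hint (l + 1)).const_mul _),
    intervalIntegral.integral_const_mul, intervalIntegral.integral_const_mul, hbdry] at hFTC
  unfold fracSymbolFourierCoeff
  linear_combination (1 / π) * hFTC

theorem fracSymbolFourierCoeff_zero {ω : ℝ} (hω : 0 ≤ ω) :
    fracSymbolFourierCoeff ω 0 = ((Gamma (ω + 1) / Gamma (ω / 2 + 1) ^ 2 : ℝ) : ℂ) := by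
  simp only [fracSymbolFourierCoeff, Int.cast_zero, mul_zero, zero_mul, neg_zero,
    Complex.exp_zero, mul_one, intervalIntegral.integral_ofReal, integral_fracSymbol hω]
  push_cast
  field_simp

noncomputable def fracCenteredCoeff (ω : ℝ) (l : ℤ) : ℝ :=
  (-1) ^ l * Gamma (ω + 1) / (Gamma (ω / 2 - l + 1) * Gamma (ω / 2 + l + 1))

theorem fracCenteredCoeff_recurrence {ω : ℝ} (hω : ∀ k : ℤ, ω / 2 ≠ k) (l : ℤ) :
    (ω / 2 - l) * fracCenteredCoeff ω l
      + (ω / 2 + l + 1) * fracCenteredCoeff ω (l + 1) = 0 := by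
  have hA : ω / 2 - l ≠ 0 := fun h => hω l (by linarith)
  have hB : ω / 2 + l + 1 ≠ 0 := fun h => hω (-l - 1) (by push_cast; linarith)
  unfold fracCenteredCoeff
  rw [zpow_add_one₀ (by norm_num), Int.cast_add, Int.cast_one,
    show ω / 2 - (l + 1) + 1 = ω / 2 - l by ring,
    show ω / 2 + (l + 1) + 1 = ω / 2 + l + 1 + 1 by ring, Gamma_add_one hB, Gamma_add_one hA]
  generalize ω / 2 - l = A at *
  generalize ω / 2 + l + 1 = B at *
  field_simp
  ring

/-- For `ω ∈ (1,2)`, the `l`-th Fourier coefficient of the symbol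
`g(θ) = (4 sin²(θ/2))^{ω/2}` admits the closed form
`(1/(2π)) ∫_{-π}^{π} (4 sin²(θ/2))^{ω/2} e^{-ilθ} dθ
  = (-1)^l Γ(ω+1) / (Γ(ω/2 - l + 1) Γ(ω/2 + l + 1))`. -/
theorem fourier_coefficient_closed_form
    (ω : ℝ) (hω : ω ∈ Set.Ioo (1 : ℝ) 2) (l : ℤ) :
    (1 / (2 * Real.pi) : ℂ) *
        ∫ θ in (-Real.pi)..Real.pi,
          (((4 * Real.sin (θ / 2) ^ 2) ^ (ω / 2) : ℝ) : ℂ) *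
            Complex.exp (-(Complex.I * (l : ℂ) * (θ : ℂ))) =
      (((-1 : ℝ) ^ l * Real.Gamma (ω + 1) /
          (Real.Gamma (ω / 2 - l + 1) * Real.Gamma (ω / 2 + l + 1)) : ℝ) : ℂ) := by
  have hω0 : 0 ≤ ω := by linarith [hω.1]
  have hω_not_int : ∀ k : ℤ, ω / 2 ≠ k := by
    intro k hk
    have h0 : (0 : ℝ) < k := by linarith [hω.1]
    have h1 : (k : ℝ) < 1 := by linarith [hω.2]
    norm_cast at h0 h1
    omega
  refine eq_of_forall_mul_add_mul_succ_eq_zero (p := fun k => (ω / 2 - k : ℂ))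
    (q := fun k => (ω / 2 + k + 1 : ℂ)) (b := fun k => (fracCenteredCoeff ω k : ℂ))
    ?_ ?_ (fracSymbolFourierCoeff_recurrence hω0) ?_ ?_ l
  · intro k h
    exact hω_not_int k (by exact_mod_cast sub_eq_zero.1 h)
  · intro k h
    exact hω_not_int (-k - 1) (by push_cast; exact_mod_cast (by linear_combination h :
      (ω / 2 : ℂ) = -k - 1))
  · intro k
    exact_mod_cast fracCenteredCoeff_recurrence hω_not_int k
  · rw [fracSymbolFourierCoeff_zero hω0]
    simp [fracCenteredCoeff, sq]
end

section
/- Let ω ∈ (1,2) and for l ∈ ℤ define a_l^{(ω)} := (-1)^l Γ(ω+1) / ( Γ(ω/2 - l + 1) · Γ(ω/2 + l + 1) ). Then a_0^{(ω)} = Γ(ω+1)/Γ(ω/2+1)² ≥ 0, and for every l ≠ 0 one has a_l^{(ω)} = a_{-l}^{(ω)} < 0; that is, a_0^{(ω)} is the only nonnegative coefficient. -/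
lemma gamma_sign_aux (x : ℝ) (hx0 : 0 < x) (hx1 : x < 1) :
    ∀ n : ℕ, 0 < (-1 : ℝ) ^ n * Real.Gamma (x - n) := by
  intro n
  induction n with
  | zero => simpa using Real.Gamma_pos_of_pos hx0
  | succ n ih =>
    have hneg : x - (n + 1 : ℕ) < 0 := by
      have h0 : (0:ℝ) ≤ n := Nat.cast_nonneg n
      push_cast; linarith
    have ht : x - ((n + 1 : ℕ) : ℝ) ≠ 0 := ne_of_lt hneg
    have hrec := Real.Gamma_add_one ht
    have heq : x - ((n + 1 : ℕ) : ℝ) + 1 = x - n := by push_cast; ring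
    rw [heq] at hrec
    have hG : Real.Gamma (x - ((n+1:ℕ):ℝ)) =
        Real.Gamma (x - n) / (x - ((n+1:ℕ):ℝ)) := by
      rw [hrec, mul_comm, mul_div_assoc, div_self ht, mul_one]
    rw [hG]
    have : (-1:ℝ) ^ (n+1) * (Real.Gamma (x - n) / (x - ((n+1:ℕ):ℝ)))
        = ((-1:ℝ) ^ n * Real.Gamma (x - n)) * (-1 / (x - ((n+1:ℕ):ℝ))) := by
      ring
    rw [this]
    have h2 : 0 < -1 / (x - ((n+1:ℕ):ℝ)) := div_pos_of_neg_of_neg (by norm_num) hneg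
    exact mul_pos ih h2

/-- For `ω ∈ (1,2)` and `a_l := (-1)^l Γ(ω+1)/(Γ(ω/2-l+1)Γ(ω/2+l+1))`, the coefficient
`a_0 = Γ(ω+1)/Γ(ω/2+1)² ≥ 0` and for every `l ≠ 0` one has `a_l = a_{-l} < 0`,
i.e. `a_0` is the only nonnegative coefficient. -/
theorem fourier_coefficients_sign
    (ω : ℝ) (hω : ω ∈ Set.Ioo (1 : ℝ) 2)
    (a : ℤ → ℝ)
    (ha : ∀ l : ℤ, a l = (-1 : ℝ) ^ l * Real.Gamma (ω + 1) /
        (Real.Gamma (ω / 2 - l + 1) * Real.Gamma (ω / 2 + l + 1))) :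
    a 0 = Real.Gamma (ω + 1) / (Real.Gamma (ω / 2 + 1)) ^ 2 ∧
    0 ≤ a 0 ∧
    ∀ l : ℤ, l ≠ 0 → a l = a (-l) ∧ a l < 0 := by
  obtain ⟨hω1, hω2⟩ := hω
  have hΓω : 0 < Real.Gamma (ω + 1) := Real.Gamma_pos_of_pos (by linarith)
  have ha0 : a 0 = Real.Gamma (ω + 1) / (Real.Gamma (ω / 2 + 1)) ^ 2 := by
    rw [ha 0]; norm_num; ring
  refine ⟨ha0, ?_, ?_⟩
  · rw [ha0]; positivity
  · -- key: for positive l, a l < 0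
    have key : ∀ l : ℤ, 0 < l → a l < 0 := by
      intro l hl
      lift l to ℕ using hl.le with n
      obtain ⟨m, rfl⟩ : ∃ m : ℕ, n = m + 1 := by
        cases n with
        | zero => simp at hl
        | succ m => exact ⟨m, rfl⟩
      have hm := gamma_sign_aux (ω / 2) (by linarith) (by linarith) m
      have harg : ω / 2 - ((m + 1 : ℕ) : ℤ) + 1 = ω / 2 - (m : ℝ) := by
        push_cast; ring
      have hΓ2 : 0 < Real.Gamma (ω / 2 + ((m + 1 : ℕ) : ℤ) + 1) := by
        apply Real.Gamma_pos_of_pos; push_cast; positivity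
      rw [ha, harg]
      have hzpow : (-1 : ℝ) ^ ((m + 1 : ℕ) : ℤ) = (-1 : ℝ) ^ (m + 1) := by
        rw [zpow_natCast]
      rw [hzpow]
      set c := Real.Gamma (ω / 2 - (m : ℝ))
      set d := Real.Gamma (ω / 2 + ((m + 1 : ℕ) : ℤ) + 1)
      have hc : c = (-1:ℝ)^m * ((-1:ℝ)^m * c) := by
        rw [← mul_assoc, ← pow_add, Even.neg_one_pow ⟨m, rfl⟩, one_mul]
      rw [hc]
      have h1 : (-1:ℝ) ^ (m+1) * Real.Gamma (ω + 1) /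
          ((-1:ℝ)^m * ((-1:ℝ)^m * c) * d)
          = - (Real.Gamma (ω + 1) / (((-1:ℝ)^m * c) * d)) := by
        rcases Nat.even_or_odd m with he | ho
        · rw [he.neg_one_pow, Odd.neg_one_pow (by simpa using he.add_one)]; ring
        · rw [ho.neg_one_pow, Even.neg_one_pow (by simpa using ho.add_one)]; ring
      rw [h1, neg_neg_iff_pos]
      exact div_pos hΓω (mul_pos hm hΓ2)
    intro l hl
    have hsym : ∀ k : ℤ, a k = a (-k) := by
      intro k
      rw [ha, ha]
      have h1 : (-1 : ℝ) ^ (-k) = (-1 : ℝ) ^ k := by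
        rw [zpow_neg, ← inv_zpow, inv_neg, inv_one]
      have h2 : ω / 2 - ((-k : ℤ) : ℝ) + 1 = ω / 2 + (k : ℝ) + 1 := by push_cast; ring
      have h3 : ω / 2 + ((-k : ℤ) : ℝ) + 1 = ω / 2 - (k : ℝ) + 1 := by push_cast; ring
      rw [h1, h2, h3, mul_comm (Real.Gamma (ω / 2 + (k:ℝ) + 1))]
    refine ⟨hsym l, ?_⟩
    rcases lt_or_gt_of_ne hl with h | h
    · rw [hsym l]; exact key (-l) (by omega)
    · exact key l h
end

section
/- Let ω ∈ (1,2) and for l ∈ ℤ define a_l^{(ω)} := (-1)^l Γ(ω+1) / ( Γ(ω/2 - l + 1) · Γ(ω/2 + l + 1) ). Then the family (a_l^{(ω)})_{l ∈ ℤ} is summable with sum equal to zero: Σ_{l ∈ ℤ} a_l^{(ω)} = 0. -/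
open Real Filter Finset Topology

namespace FCSZ

/-- `tt ω l` is the telescoping term: `a l = tt l - tt (l-1)`. -/
noncomputable def tt (ω : ℝ) (l : ℤ) : ℝ :=
  (-1 : ℝ) ^ l * Real.Gamma ω / (Real.Gamma (ω / 2 + l + 1) * Real.Gamma (ω / 2 - l))

variable {ω : ℝ}

lemma not_int (h1 : 1 < ω) (h2 : ω < 2) (k : ℤ) : ω ≠ 2 * (k : ℝ) := by
  intro h
  have hk1 : (1 : ℝ) < 2 * (k : ℝ) := by linarith
  have hk2 : (2 : ℝ) * (k : ℝ) < 2 := by linarith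
  have hk1' : (1 : ℤ) < 2 * k := by exact_mod_cast hk1
  have hk2' : (2 : ℤ) * k < 2 := by exact_mod_cast hk2
  omega

lemma gne (h1 : 1 < ω) (h2 : ω < 2) (x : ℝ)
    (hx : ∃ z : ℤ, x = ω / 2 + z ∨ x = -(ω / 2) + z) : Real.Gamma x ≠ 0 := by
  apply Real.Gamma_ne_zero
  intro m hm
  obtain ⟨z, hz | hz⟩ := hx
  · exact not_int h1 h2 (-m - z) (by push_cast; rw [hz] at hm; linarith)
  · exact not_int h1 h2 (z + m) (by push_cast; rw [hz] at hm; linarith)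

lemma half_add_ne (h1 : 1 < ω) (h2 : ω < 2) (z : ℤ) : ω / 2 + (z : ℝ) ≠ 0 := by
  intro h
  exact not_int h1 h2 (-z) (by push_cast; linarith)

lemma pascal (h1 : 1 < ω) (h2 : ω < 2) (l : ℤ) :
    (-1 : ℝ) ^ l * Real.Gamma (ω + 1) /
      (Real.Gamma (ω / 2 - l + 1) * Real.Gamma (ω / 2 + l + 1))
    = tt ω l - tt ω (l - 1) := by
  have hne1 : Real.Gamma (ω / 2 - l) ≠ 0 := gne h1 h2 _ ⟨-l, Or.inl (by push_cast; ring)⟩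
  have hne2 : Real.Gamma (ω / 2 + l) ≠ 0 := gne h1 h2 _ ⟨l, Or.inl (by push_cast; ring)⟩
  have hd1 : ω / 2 - (l : ℝ) ≠ 0 := by
    have := half_add_ne h1 h2 (-l)
    push_cast at this
    intro h; apply this; linarith
  have hd2 : ω / 2 + (l : ℝ) ≠ 0 := half_add_ne h1 h2 l
  have e0 : Real.Gamma (ω + 1) = ω * Real.Gamma ω := Real.Gamma_add_one (by linarith)
  have e1 : Real.Gamma (ω / 2 - l + 1) = (ω / 2 - l) * Real.Gamma (ω / 2 - l) :=
    Real.Gamma_add_one hd1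
  have e2 : Real.Gamma (ω / 2 + l + 1) = (ω / 2 + l) * Real.Gamma (ω / 2 + l) :=
    Real.Gamma_add_one hd2
  have hm : ((-1 : ℝ)) ^ (l - 1) = -(-1 : ℝ) ^ l := by
    rw [zpow_sub₀ (by norm_num : (-1:ℝ) ≠ 0)]
    norm_num
    rw [div_neg, div_one]
  unfold tt
  rw [show ((l - 1 : ℤ) : ℝ) = (l : ℝ) - 1 by push_cast; ring]
  rw [show ω / 2 + ((l:ℝ) - 1) + 1 = ω / 2 + l by ring,
      show ω / 2 - ((l:ℝ) - 1) = ω / 2 - l + 1 by ring, e0, e1, e2, hm]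
  have hD0 : (ω / 2 - (l:ℝ)) * Real.Gamma (ω / 2 - l) * ((ω / 2 + (l:ℝ)) * Real.Gamma (ω / 2 + l))
      ≠ 0 := mul_ne_zero (mul_ne_zero hd1 hne1) (mul_ne_zero hd2 hne2)
  have hD1 : (ω / 2 + (l:ℝ)) * Real.Gamma (ω / 2 + l) * Real.Gamma (ω / 2 - l) ≠ 0 :=
    mul_ne_zero (mul_ne_zero hd2 hne2) hne1
  have hD2 : Real.Gamma (ω / 2 + l) * ((ω / 2 - (l:ℝ)) * Real.Gamma (ω / 2 - l)) ≠ 0 :=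
    mul_ne_zero hne2 (mul_ne_zero hd1 hne1)
  rw [div_sub_div _ _ hD1 hD2, div_eq_div_iff hD0 (mul_ne_zero hD1 hD2)]
  ring

lemma sin_pos' (h1 : 1 < ω) (h2 : ω < 2) : 0 < Real.sin (π * (ω / 2)) := by
  apply Real.sin_pos_of_pos_of_lt_pi
  · have := Real.pi_pos; nlinarith
  · have := Real.pi_pos; nlinarith

/-- reflection: closed form of `tt` without Gamma at negative arguments. -/
lemma tt_eq (h1 : 1 < ω) (h2 : ω < 2) (l : ℤ) :
    tt ω l = (Real.Gamma ω * Real.sin (π * (ω / 2)) / π) *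
      (Real.Gamma ((l : ℝ) + 1 - ω / 2) / Real.Gamma (ω / 2 + l + 1)) := by
  have hpi := Real.pi_pos
  have hs := sin_pos' h1 h2
  have hne1 : Real.Gamma (ω / 2 - l) ≠ 0 := gne h1 h2 _ ⟨-l, Or.inl (by push_cast; ring)⟩
  have hne2 : Real.Gamma (ω / 2 + l + 1) ≠ 0 := gne h1 h2 _ ⟨l + 1, Or.inl (by push_cast; ring)⟩
  have hne3 : Real.Gamma ((l : ℝ) + 1 - ω / 2) ≠ 0 :=
    gne h1 h2 _ ⟨l + 1, Or.inr (by push_cast; ring)⟩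
  have hrefl := Real.Gamma_mul_Gamma_one_sub (ω / 2 - l)
  have hsin : Real.sin (π * (ω / 2 - l)) = (-1 : ℝ) ^ l * Real.sin (π * (ω / 2)) := by
    have hc : Real.cos ((l : ℝ) * π) = (-1 : ℝ) ^ l := by
      simpa using Real.cos_int_mul_pi_sub 0 l
    rw [show π * (ω / 2 - (l:ℝ)) = π * (ω / 2) - (l:ℝ) * π by ring, Real.sin_sub,
      Real.sin_int_mul_pi, hc]
    ring
  rw [show (1 : ℝ) - (ω / 2 - (l:ℝ)) = (l:ℝ) + 1 - ω / 2 by ring, hsin] at hrefl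
  have hA : ((-1 : ℝ)) ^ l ≠ 0 := zpow_ne_zero _ (by norm_num)
  have key : Real.Gamma (ω / 2 - l) * Real.Gamma ((l : ℝ) + 1 - ω / 2) *
      ((-1 : ℝ) ^ l * Real.sin (π * (ω / 2))) = π := by
    rw [hrefl, div_mul_cancel₀ _ (mul_ne_zero hA hs.ne')]
  unfold tt
  rw [div_mul_div_comm, div_eq_div_iff (mul_ne_zero hne2 hne1) (mul_ne_zero hpi.ne' hne2)]
  rcases Int.even_or_odd l with hp | hp
  · simp only [hp.neg_one_zpow] at key ⊢
    linear_combination (-(Real.Gamma ω * Real.Gamma (ω / 2 + l + 1))) * key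
  · simp only [hp.neg_one_zpow] at key ⊢
    linear_combination (Real.Gamma ω * Real.Gamma (ω / 2 + l + 1)) * key

end FCSZ

open FCSZ in
/-- For `ω ∈ (1,2)` and `a_l := (-1)^l Γ(ω+1)/(Γ(ω/2-l+1)Γ(ω/2+l+1))`, the family
`(a_l)_{l ∈ ℤ}` is summable and its sum is zero. -/
theorem fourier_coefficients_sum_zero
    (ω : ℝ) (hω : ω ∈ Set.Ioo (1 : ℝ) 2)
    (a : ℤ → ℝ)
    (ha : ∀ l : ℤ, a l = (-1 : ℝ) ^ l * Real.Gamma (ω + 1) /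
        (Real.Gamma (ω / 2 - l + 1) * Real.Gamma (ω / 2 + l + 1))) :
    Summable a ∧ ∑' l : ℤ, a l = 0 := by
  obtain ⟨h1, h2⟩ := hω
  have hpi := Real.pi_pos
  have hs := sin_pos' h1 h2
  have hGw : 0 < Real.Gamma ω := Real.Gamma_pos_of_pos (by linarith)
  set c : ℝ := Real.Gamma ω * Real.sin (π * (ω / 2)) / π with hc_def
  have hc : 0 < c := by positivity
  set r : ℕ → ℝ := fun n => Real.Gamma ((n : ℝ) + 1 - ω / 2) / Real.Gamma (ω / 2 + n + 1)
    with hr_def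
  have hrpos : ∀ n : ℕ, 0 < r n := by
    intro n
    have hn0 : (0:ℝ) ≤ n := Nat.cast_nonneg n
    apply div_pos <;> apply Real.Gamma_pos_of_pos <;> linarith
  have hA : ∀ l : ℤ, a l = tt ω l - tt ω (l - 1) := fun l => (ha l).trans (pascal h1 h2 l)
  have htt : ∀ n : ℕ, tt ω (n : ℤ) = c * r n := by
    intro n
    rw [tt_eq h1 h2 (n : ℤ)]
    push_cast
    rfl
  -- step relation and antitonicity for r
  have hstep : ∀ n : ℕ, r (n+1) = r n * (((n:ℝ) + 1 - ω/2) / ((n:ℝ) + 1 + ω/2)) := by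
    intro n
    have hn0 : (0:ℝ) ≤ n := Nat.cast_nonneg n
    have hx : ((n:ℝ) + 1 - ω/2) ≠ 0 := by intro h; nlinarith
    have hy : (ω/2 + (n:ℝ) + 1) ≠ 0 := by intro h; nlinarith
    have g1 : Real.Gamma ((↑(n+1):ℝ) + 1 - ω/2)
        = ((n:ℝ)+1-ω/2) * Real.Gamma ((n:ℝ)+1-ω/2) := by
      rw [show ((↑(n+1):ℝ) + 1 - ω/2) = ((n:ℝ)+1-ω/2) + 1 by push_cast; ring]
      exact Real.Gamma_add_one hx
    have g2 : Real.Gamma (ω/2 + (↑(n+1):ℝ) + 1)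
        = (ω/2 + (n:ℝ) + 1) * Real.Gamma (ω/2 + (n:ℝ) + 1) := by
      rw [show (ω/2 + (↑(n+1):ℝ) + 1) = (ω/2 + (n:ℝ) + 1) + 1 by push_cast; ring]
      exact Real.Gamma_add_one hy
    simp only [hr_def]
    rw [g1, g2]
    rw [div_mul_div_comm, div_eq_div_iff]
    · ring
    · exact mul_ne_zero hy (Real.Gamma_pos_of_pos (by nlinarith)).ne'
    · exact mul_ne_zero (Real.Gamma_pos_of_pos (by nlinarith)).ne' (by push_cast; intro h; nlinarith)
  have hanti : ∀ n : ℕ, r (n+1) ≤ r n := by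
    intro n
    rw [hstep n]
    have hn0 : (0:ℝ) ≤ n := Nat.cast_nonneg n
    have h01 : ((n:ℝ)+1-ω/2)/((n:ℝ)+1+ω/2) ≤ 1 := by
      rw [div_le_one (by nlinarith)]; nlinarith
    nlinarith [hrpos n]
  have hbound : ∀ n : ℕ, 1 ≤ n → r n ≤ 1 / (n:ℝ) := by
    intro n hn
    have hn1 : (1:ℝ) ≤ n := by exact_mod_cast hn
    have hxpos : (0:ℝ) < (n:ℝ) + 1 - ω/2 := by nlinarith
    have hGx : 0 < Real.Gamma ((n:ℝ)+1-ω/2) := Real.Gamma_pos_of_pos (by nlinarith)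
    have hΓle : Real.Gamma ((n:ℝ)+2-ω/2) ≤ Real.Gamma (ω/2+(n:ℝ)+1) := by
      apply Real.Gamma_strictMonoOn_Ici.monotoneOn
      · simp only [Set.mem_Ici]; nlinarith
      · simp only [Set.mem_Ici]; nlinarith
      · nlinarith
    have hfe : Real.Gamma ((n:ℝ)+2-ω/2) = ((n:ℝ)+1-ω/2) * Real.Gamma ((n:ℝ)+1-ω/2) := by
      rw [show ((n:ℝ)+2-ω/2) = ((n:ℝ)+1-ω/2)+1 by ring]
      exact Real.Gamma_add_one hxpos.ne'
    have h3 : r n ≤ 1/((n:ℝ)+1-ω/2) := by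
      have hyp : 0 < ((n:ℝ)+1-ω/2) * Real.Gamma ((n:ℝ)+1-ω/2) := mul_pos hxpos hGx
      have step1 : r n ≤ Real.Gamma ((n:ℝ)+1-ω/2) /
          (((n:ℝ)+1-ω/2) * Real.Gamma ((n:ℝ)+1-ω/2)) := by
        rw [hr_def]
        apply div_le_div_of_nonneg_left hGx.le hyp
        rw [← hfe]; exact hΓle
      calc r n ≤ _ := step1
        _ = 1/((n:ℝ)+1-ω/2) := by
            rw [mul_comm, div_mul_eq_div_div, div_self hGx.ne']
    calc r n ≤ 1/((n:ℝ)+1-ω/2) := h3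
      _ ≤ 1/(n:ℝ) := by
          apply one_div_le_one_div_of_le (by linarith) (by nlinarith)
  have hrlim : Tendsto r atTop (𝓝 0) := by
    apply tendsto_of_tendsto_of_tendsto_of_le_of_le' tendsto_const_nhds
      tendsto_one_div_atTop_nhds_zero_nat
    · exact Eventually.of_forall fun n => (hrpos n).le
    · filter_upwards [eventually_ge_atTop 1] with n hn using hbound n hn
  -- telescoping partial sums
  have hps : ∀ N : ℕ, ∑ i ∈ Finset.range N, a i = tt ω ((N:ℤ) - 1) - tt ω (-1) := by
    intro N
    have hts := Finset.sum_range_sub (fun k : ℕ => tt ω ((k:ℤ) - 1)) N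
    simp only [Nat.cast_zero, zero_sub] at hts
    rw [← hts]
    apply Finset.sum_congr rfl
    intro i _
    rw [hA i, show ((i+1:ℕ):ℤ) - 1 = (i:ℤ) by push_cast; ring]
  have htt1 : tt ω (-1) = -(c * r 0) := by
    have h0 : tt ω ((0:ℕ):ℤ) = c * r 0 := htt 0
    rw [show ((0:ℕ):ℤ) = 0 from rfl] at h0
    have hneg : tt ω (-1) = - tt ω 0 := by
      unfold tt
      norm_num
      ring
    rw [hneg, h0]
  -- summability
  have hgsummable : Summable (fun n : ℕ => c * (r n - r (n+1))) := by
    apply summable_of_sum_range_le (c := c * r 0)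
    · intro n; have := hanti n; nlinarith
    · intro n
      rw [← Finset.mul_sum, Finset.sum_range_sub' (fun k => r k)]
      nlinarith [hrpos n, hrpos 0]
  have ha1 : ∀ n : ℕ, a ((n:ℤ)+1) = -(c * (r n - r (n+1))) := by
    intro n
    rw [hA, show ((n:ℤ)+1) - 1 = (n:ℤ) by ring,
      show ((n:ℤ)+1) = ((n+1:ℕ):ℤ) by push_cast; ring, htt (n+1), htt n]
    ring
  have hsum1 : Summable (fun n : ℕ => a ((n:ℤ)+1)) :=
    hgsummable.neg.congr fun n => (ha1 n).symm
  have hsumN : Summable (fun n : ℕ => a (n:ℤ)) := by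
    rw [← summable_nat_add_iff 1]
    exact hsum1.congr fun n => by rw [show ((n:ℤ)+1) = ((n+1:ℕ):ℤ) by push_cast; ring]
  -- value of the nonnegative-index sum
  have hlim : Tendsto (fun N : ℕ => ∑ i ∈ Finset.range N, a i) atTop (𝓝 (c * r 0)) := by
    simp only [hps]
    have h2' : Tendsto (fun N : ℕ => tt ω ((N:ℤ)-1)) atTop (𝓝 0) := by
      have hcomp : Tendsto (fun N : ℕ => c * r (N-1)) atTop (𝓝 (c*0)) :=
        ((hrlim.comp (tendsto_sub_atTop_nat 1)).const_mul c)
      rw [mul_zero] at hcomp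
      apply hcomp.congr'
      filter_upwards [eventually_ge_atTop 1] with N hN
      rw [show ((N:ℤ)-1) = ((N-1:ℕ):ℤ) by omega, htt (N-1)]
    simp only [htt1]
    have hfin := h2'.sub (tendsto_const_nhds (x := -(c * r 0)) (f := atTop))
    rw [zero_sub, neg_neg] at hfin
    exact hfin
  have hhs1 : HasSum (fun n : ℕ => a (n:ℤ)) (c * r 0) := by
    have ht := hsumN.hasSum.tendsto_sum_nat
    have huniq := tendsto_nhds_unique ht hlim
    rw [← huniq]
    exact hsumN.hasSum
  have ha0 : a 0 = 2 * (c * r 0) := by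
    have h0 : tt ω ((0:ℕ):ℤ) = c * r 0 := htt 0
    rw [show ((0:ℕ):ℤ) = 0 from rfl] at h0
    rw [hA 0, show (0:ℤ)-1 = -1 by ring, htt1, h0]
    ring
  -- symmetry
  have hsym : ∀ l : ℤ, a (-l) = a l := by
    intro l
    rw [ha, ha]
    have hzp : ((-1:ℝ)) ^ (-l) = ((-1:ℝ))^l := by
      rcases Int.even_or_odd l with h | h
      · rw [h.neg_one_zpow, (h.neg).neg_one_zpow]
      · rw [h.neg_one_zpow, (h.neg).neg_one_zpow]
    rw [hzp]
    push_cast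
    rw [show ω/2 - (-(l:ℝ)) + 1 = ω/2 + l + 1 by ring,
      show ω/2 + (-(l:ℝ)) + 1 = ω/2 - l + 1 by ring]
    ring
  have hhs2 : HasSum (fun n : ℕ => a (-((n:ℤ)+1))) (-(c * r 0)) := by
    have key : HasSum (fun n : ℕ => a ((↑(n+1):ℤ))) (-(c*r 0)) := by
      apply (hasSum_nat_add_iff (f := fun n : ℕ => a (n:ℤ)) 1).mpr
      have heq : -(c*r 0) + ∑ i ∈ Finset.range 1, a ((i:ℕ):ℤ) = c * r 0 := by
        rw [Finset.sum_range_one, show (((0:ℕ)):ℤ) = 0 from rfl, ha0]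
        ring
      rw [heq]
      exact hhs1
    have hfun : (fun n : ℕ => a (-((n:ℤ)+1))) = (fun n : ℕ => a ((↑(n+1):ℤ))) := by
      funext n
      rw [show (-((n:ℤ)+1)) = -(((n+1:ℕ)):ℤ) by push_cast; ring, hsym]
    rw [hfun]
    exact key
  have hhs : HasSum a 0 := by
    have htot := hhs1.of_nat_of_neg_add_one hhs2
    rw [add_neg_cancel] at htot
    exact htot
  exact ⟨hhs.summable, hhs.tsum_eq⟩
end

section
/- Let ω ∈ (1,2) and for l ∈ ℤ define a_l^{(ω)} := (-1)^l Γ(ω+1) / ( Γ(ω/2 - l + 1) · Γ(ω/2 + l + 1) ). Then for every integer l ≥ 1 one has a_l^{(ω)} < a_{l+1}^{(ω)} < 0; that is, the sequence (a_l^{(ω)})_{l ≥ 1} is negative and strictly increasing toward zero, so that |a_{l+1}^{(ω)}| < |a_l^{(ω)}| for l ≥ 1. -/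
/-- For `ω ∈ (1,2)` and `a_l := (-1)^l Γ(ω+1)/(Γ(ω/2-l+1)Γ(ω/2+l+1))`, for every
integer `l ≥ 1` one has `a_l < a_{l+1} < 0`; in particular `|a_{l+1}| < |a_l|`. -/
theorem fourier_coefficients_increasing
    (ω : ℝ) (hω : ω ∈ Set.Ioo (1 : ℝ) 2)
    (a : ℤ → ℝ)
    (ha : ∀ l : ℤ, a l = (-1 : ℝ) ^ l * Real.Gamma (ω + 1) /
        (Real.Gamma (ω / 2 - l + 1) * Real.Gamma (ω / 2 + l + 1))) :
    ∀ l : ℤ, 1 ≤ l → a l < a (l + 1) ∧ a (l + 1) < 0 ∧ |a (l + 1)| < |a l| := by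
  obtain ⟨hω1, hω2⟩ := hω
  have hhalf1 : (1:ℝ)/2 < ω/2 := by linarith
  have hhalf2 : ω/2 < 1 := by linarith
  -- Gamma at ω/2 - l + 1 is never zero
  have hGne : ∀ l : ℤ, Real.Gamma (ω/2 - l + 1) ≠ 0 := by
    intro l
    apply Real.Gamma_ne_zero
    intro m hm
    have hk : ((l - 1 - (m:ℤ) : ℤ) : ℝ) = ω/2 := by push_cast; linarith
    have hk0 : (0:ℝ) < ((l - 1 - (m:ℤ) : ℤ) : ℝ) := by rw [hk]; linarith
    have hk0' : (0:ℤ) < l - 1 - (m:ℤ) := by exact_mod_cast hk0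
    have hk1 : (1:ℤ) ≤ l - 1 - (m:ℤ) := hk0'
    have : (1:ℝ) ≤ ((l - 1 - (m:ℤ) : ℤ) : ℝ) := by exact_mod_cast hk1
    rw [hk] at this; linarith
  -- recursion
  have hrec : ∀ l : ℤ, 1 ≤ l → a (l+1) = (((l:ℝ) - ω/2)/((l:ℝ) + 1 + ω/2)) * a l := by
    intro l hl
    have hl' : (1:ℝ) ≤ (l:ℝ) := by exact_mod_cast hl
    have hxlt : ω/2 - (l:ℝ) < 0 := by linarith
    have hx : ω/2 - (l:ℝ) ≠ 0 := hxlt.ne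
    have hy : (0:ℝ) < ω/2 + (l:ℝ) + 1 := by linarith
    have hG1 : Real.Gamma (ω/2 - l + 1) = (ω/2 - l) * Real.Gamma (ω/2 - l) :=
      Real.Gamma_add_one hx
    have hG2 : Real.Gamma (ω/2 + (l:ℝ) + 1 + 1) = (ω/2 + l + 1) * Real.Gamma (ω/2 + l + 1) :=
      Real.Gamma_add_one hy.ne'
    have hGpos : (0:ℝ) < Real.Gamma (ω/2 + l + 1) :=
      Real.Gamma_pos_of_pos (by linarith)
    have hGlow : Real.Gamma (ω/2 - (l:ℝ)) ≠ 0 := by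
      have := hGne l
      rw [hG1] at this
      exact fun h => this (by rw [h, mul_zero])
    rw [ha, ha]
    push_cast
    have e1 : ω/2 - ((l:ℝ) + 1) + 1 = ω/2 - l := by ring
    have e2 : ω/2 + ((l:ℝ) + 1) + 1 = ω/2 + (l:ℝ) + 1 + 1 := by ring
    rw [e1, e2, hG2]
    rw [zpow_add_one₀ (by norm_num : (-1:ℝ) ≠ 0)]
    rw [hG1, div_mul_div_comm]
    have hden1 : Real.Gamma (ω/2 - (l:ℝ)) * ((ω/2 + l + 1) * Real.Gamma (ω/2 + l + 1)) ≠ 0 :=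
      mul_ne_zero hGlow (mul_ne_zero hy.ne' hGpos.ne')
    have hden2 : ((l:ℝ) + 1 + ω/2) * ((ω/2 - l) * Real.Gamma (ω/2 - l) * Real.Gamma (ω/2 + l + 1)) ≠ 0 :=
      mul_ne_zero (by positivity) (mul_ne_zero (mul_ne_zero hx hGlow) hGpos.ne')
    rw [div_eq_div_iff hden1 hden2]
    ring
  -- negativity for all l ≥ 1, by induction
  have hneg : ∀ l : ℤ, 1 ≤ l → a l < 0 := by
    have base : a 1 < 0 := by
      have h1 : a 1 = (-1 : ℝ) ^ (1:ℤ) * Real.Gamma (ω + 1) /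
          (Real.Gamma (ω / 2 - (1:ℤ) + 1) * Real.Gamma (ω / 2 + (1:ℤ) + 1)) := ha 1
      have e1 : ω/2 - ((1:ℤ):ℝ) + 1 = ω/2 := by push_cast; ring
      have e2 : ω/2 + ((1:ℤ):ℝ) + 1 = ω/2 + 2 := by push_cast; ring
      rw [e1, e2] at h1
      have p1 : (0:ℝ) < Real.Gamma (ω + 1) := Real.Gamma_pos_of_pos (by linarith)
      have p2 : (0:ℝ) < Real.Gamma (ω/2) := Real.Gamma_pos_of_pos (by linarith)
      have p3 : (0:ℝ) < Real.Gamma (ω/2 + 2) := Real.Gamma_pos_of_pos (by linarith)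
      rw [h1]
      have h2 : (-1 : ℝ) ^ (1:ℤ) = -1 := by norm_num
      rw [h2]
      exact div_neg_of_neg_of_pos (by nlinarith) (mul_pos p2 p3)
    have step : ∀ n : ℤ, 1 ≤ n → a n < 0 → a (n+1) < 0 := by
      intro n hn ih
      have hrn := hrec n hn
      have hn' : (1:ℝ) ≤ (n:ℝ) := by exact_mod_cast hn
      have hc : (0:ℝ) < ((n:ℝ) - ω/2)/((n:ℝ) + 1 + ω/2) :=
        div_pos (by linarith) (by linarith)
      rw [hrn]
      exact mul_neg_of_pos_of_neg hc ih
    intro l hl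
    exact Int.le_induction base step l hl
  -- conclude
  intro l hl
  have hal := hneg l hl
  have hl' : (1:ℝ) ≤ (l:ℝ) := by exact_mod_cast hl
  have hrl := hrec l hl
  have hc0 : (0:ℝ) < ((l:ℝ) - ω/2)/((l:ℝ) + 1 + ω/2) :=
    div_pos (by linarith) (by linarith)
  have hc1 : ((l:ℝ) - ω/2)/((l:ℝ) + 1 + ω/2) < 1 := by
    rw [div_lt_one (by linarith)]; linarith
  have hnext : a (l+1) < 0 := by
    rw [hrl]; exact mul_neg_of_pos_of_neg hc0 hal
  have hlt : a l < a (l+1) := by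
    rw [hrl]
    nlinarith
  refine ⟨hlt, hnext, ?_⟩
  rw [abs_of_neg hnext, abs_of_neg hal]
  linarith
end
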